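/- Let n ≥ 1 and 1 ≤ r ≤ n. If λ ∈ Γ_r and μ ∈ ℝⁿ satisfies μ_i ≥ λ_i for every i, then μ ∈ Γ_r and S_r(μ) ≥ S_r(λ). -/

import Mathlib

/-- The `r`-th elementary symmetric function of `x : Fin n → ℝ`. -/
def esymm (n r : ℕ) (x : Fin n → ℝ) : ℝ :=
  ∑ s ∈ Finset.powersetCard r (Finset.univ : Finset (Fin n)), ∏ i ∈ s, x i

/-- The Gårding cone `Γ_r = {x ∈ ℝⁿ : S_j(x) > 0 for j = 1, …, r}`. -/
def gardingCone (n r : ℕ) : Set (Fin n → ℝ) :=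
  {x | ∀ j : ℕ, 1 ≤ j → j ≤ r → 0 < esymm n j x}

/-!
Raising one coordinate `xᵢ` to `c` changes `S_j(x)` by `(c - xᵢ) S_{j-1}(x')`, where `x'` omits
the `i`-th coordinate, so it suffices that `x ∈ Γ_r` forces `S_j(x') > 0` for all `j < r`.
This follows by induction on `j` from Newton's inequality `S_j S_{j+2} ≤ S_{j+1}²` for `x'`:
if `S_{j+1}(x') ≤ 0`, positivity of `S_{j+1}(x)` and `S_{j+2}(x)` forces `xᵢ > 0` and then
`S_j(x') S_{j+2}(x') > S_{j+1}(x')²`. Newton's inequality for the means `S_k / C(m, k)` is proved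
by induction on the number `m` of variables: the roots of the derivative of `∏ (X - a)` are real
(Rolle) and have the same means up to degree `m - 1`, and inverting all variables turns the top case
`k + 2 = m` into `S₂ / C(m, 2) ≤ (S₁ / m)²`, which is Cauchy–Schwarz.
-/

open Polynomial in
theorem Polynomial.Splits.derivative {p : ℝ[X]} (hp : p.Splits) : p.derivative.Splits := by
  rw [splits_iff_card_roots] at hp ⊢
  have h₁ := card_roots_le_derivative p
  have h₂ := natDegree_derivative_le p
  have h₃ := card_roots' p.derivative
  omega

theorem Nat.choose_mul_choose_add_two_le_sq (m k : ℕ) :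
    m.choose k * m.choose (k + 2) ≤ m.choose (k + 1) ^ 2 := by
  rcases lt_or_ge m (k + 1) with hm | hm
  · rw [Nat.choose_eq_zero_of_lt (by omega : m < k + 2), mul_zero]
    exact Nat.zero_le _
  obtain ⟨d, rfl⟩ : ∃ d, m = k + 1 + d := ⟨m - (k + 1), by omega⟩
  have h₁ := Nat.choose_succ_right_eq (k + 1 + d) k
  have h₂ := Nat.choose_succ_right_eq (k + 1 + d) (k + 1)
  rw [show k + 1 + d - k = d + 1 by omega] at h₁
  rw [show k + 1 + d - (k + 1) = d by omega] at h₂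
  refine Nat.le_of_mul_le_mul_right (c := (d + 1) * (k + 2)) ?_ (by positivity)
  calc _ = (k + 1 + d).choose k * (d + 1) * ((k + 1 + d).choose (k + 2) * (k + 2)) := by ring
    _ = (k + 1 + d).choose (k + 1) ^ 2 * ((k + 1) * d) := by rw [← h₁, h₂]; ring
    _ ≤ _ := Nat.mul_le_mul_left _ (by nlinarith)

namespace Multiset

section CommSemiring

variable {R : Type*} [CommSemiring R]

theorem esymm_zero (s : Multiset R) : s.esymm 0 = 1 := by
  simp [esymm]

theorem esymm_eq_zero_of_card_lt {s : Multiset R} {k : ℕ} (h : card s < k) : s.esymm k = 0 := by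
  simp [esymm, powersetCard_eq_empty _ h]

theorem esymm_cons_succ (a : R) (s : Multiset R) (k : ℕ) :
    (a ::ₘ s).esymm (k + 1) = s.esymm (k + 1) + a * s.esymm k := by
  simp only [esymm, powersetCard_cons, map_add, sum_add, map_map, Function.comp_def, prod_cons,
    sum_map_mul_left]

theorem esymm_one (s : Multiset R) : s.esymm 1 = s.sum := by
  induction s using Multiset.induction with
  | empty => exact esymm_eq_zero_of_card_lt (by simp)
  | cons a s ih => rw [esymm_cons_succ, ih, esymm_zero, sum_cons, mul_one, add_comm]

theorem esymm_card (s : Multiset R) : s.esymm (card s) = s.prod := by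
  induction s using Multiset.induction with
  | empty => simp [esymm_zero]
  | cons a s ih =>
    rw [card_cons, esymm_cons_succ, ih, esymm_eq_zero_of_card_lt (Nat.lt_succ_self _), prod_cons,
      zero_add]

theorem sq_sum_eq_sum_map_sq_add_two_mul_esymm_two (s : Multiset R) :
    s.sum ^ 2 = (s.map (· ^ 2)).sum + 2 * s.esymm 2 := by
  induction s using Multiset.induction with
  | empty => simp [esymm_eq_zero_of_card_lt (show card (0 : Multiset R) < 2 by simp)]
  | cons a s ih =>
    rw [sum_cons, map_cons, sum_cons, esymm_cons_succ, esymm_one, add_sq, ih]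
    ring

end CommSemiring

theorem two_mul_mul_sum_le (a : ℝ) (s : Multiset ℝ) :
    2 * a * s.sum ≤ card s * a ^ 2 + (s.map (· ^ 2)).sum := by
  induction s using Multiset.induction with
  | empty => simp
  | cons b s ih =>
    rw [sum_cons, map_cons, sum_cons, card_cons]
    push_cast
    nlinarith [sq_nonneg (a - b)]

theorem sq_sum_le_card_mul_sum_map_sq (s : Multiset ℝ) :
    s.sum ^ 2 ≤ card s * (s.map (· ^ 2)).sum := by
  induction s using Multiset.induction with
  | empty => simp
  | cons a s ih =>
    rw [sum_cons, map_cons, sum_cons, card_cons]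
    push_cast
    nlinarith [two_mul_mul_sum_le a s]

theorem esymm_map_inv_mul_prod {s : Multiset ℝ} (hs : (0 : ℝ) ∉ s) {i j : ℕ}
    (hij : i + j = card s) : (s.map (·⁻¹)).esymm i * s.prod = s.esymm j := by
  induction s using Multiset.induction generalizing i j with
  | empty =>
    obtain ⟨rfl, rfl⟩ : i = 0 ∧ j = 0 := by simpa using hij
    simp [esymm_zero]
  | cons a s ih =>
    have ha : a ≠ 0 := fun h => hs (h ▸ mem_cons_self a s)
    have hs' : (0 : ℝ) ∉ s := fun h => hs (mem_cons_of_mem h)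
    rw [card_cons] at hij
    rcases i with _ | i
    · rw [esymm_zero, one_mul, ← esymm_card, card_cons]
      congr 1
      omega
    rw [map_cons, esymm_cons_succ, prod_cons]
    rcases j with _ | j
    · have h := ih hs' (by omega : i + 0 = card s)
      rw [esymm_zero] at h ⊢
      rw [esymm_eq_zero_of_card_lt (by simp; omega), zero_add, mul_mul_mul_comm,
        inv_mul_cancel₀ ha, one_mul, h]
    · rw [esymm_cons_succ, ← ih hs' (by omega : i + (j + 1) = card s),
        ← ih hs' (by omega : i + 1 + j = card s)]
      field_simp
      ring

open Polynomial in
/-- `ν` is the multiset of roots of the derivative of `∏ a ∈ s, (X - a)`; they are all real. -/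
theorem exists_card_eq_mul_esymm_eq (s : Multiset ℝ) :
    ∃ ν : Multiset ℝ, card ν = card s - 1 ∧
      ∀ r < card s, (card s : ℝ) * ν.esymm r = (card s - r) * s.esymm r := by
  set m := card s
  set f : ℝ[X] := (s.map (X - C ·)).prod
  have hf : f.Splits := Splits.multisetProd (by simp [Splits.X_sub_C])
  have hfdeg : f.natDegree = m := natDegree_multiset_prod_X_sub_C_eq_card s
  have hg := hf.derivative
  have hgdeg : (derivative f).natDegree = m - 1 := by rw [natDegree_derivative, hfdeg]
  have hcard : card (derivative f).roots = m - 1 := by rw [← hg.natDegree_eq_card_roots, hgdeg]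
  refine ⟨(derivative f).roots, hcard, fun r hr => ?_⟩
  have hcoeff : (derivative f).coeff (m - 1 - r) = (-1) ^ r * ((m - r) * s.esymm r) := by
    rw [coeff_derivative, prod_X_sub_C_coeff s (by omega), show m - (m - 1 - r + 1) = r by omega]
    push_cast [Nat.sub_sub, Nat.cast_sub (by omega : 1 + r ≤ m)]
    ring
  have hlead : (derivative f).leadingCoeff = m := by
    have hmonic : f.coeff m = 1 :=
      hfdeg ▸ (monic_multiset_prod_of_monic _ _ fun a _ => monic_X_sub_C a).coeff_natDegree
    rw [leadingCoeff, hgdeg, coeff_derivative, Nat.sub_add_cancel (by omega), hmonic,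
      Nat.cast_sub (by omega)]
    ring
  rw [hg.eq_prod_roots, coeff_C_mul, prod_X_sub_C_coeff _ (by omega), hcard,
    show m - 1 - (m - 1 - r) = r by omega, hlead] at hcoeff
  refine mul_left_cancel₀ (pow_ne_zero r (neg_ne_zero.mpr one_ne_zero)) ?_
  linear_combination hcoeff

noncomputable def esymmMean (s : Multiset ℝ) (k : ℕ) : ℝ :=
  s.esymm k / (card s).choose k

theorem esymmMean_zero (s : Multiset ℝ) : s.esymmMean 0 = 1 := by
  simp [esymmMean, esymm_zero]

theorem esymmMean_eq_zero_of_card_lt {s : Multiset ℝ} {k : ℕ} (h : card s < k) :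
    s.esymmMean k = 0 := by
  simp [esymmMean, esymm_eq_zero_of_card_lt h]

theorem esymmMean_two_le_sq_esymmMean_one (s : Multiset ℝ) :
    s.esymmMean 2 ≤ s.esymmMean 1 ^ 2 := by
  rcases lt_or_ge (card s) 2 with hs | hs
  · rw [esymmMean_eq_zero_of_card_lt hs]
    positivity
  have hm : (2 : ℝ) ≤ card s := by exact_mod_cast hs
  have hcs := sq_sum_le_card_mul_sum_map_sq s
  have hsq := sq_sum_eq_sum_map_sq_add_two_mul_esymm_two s
  rw [esymmMean, esymmMean, esymm_one, Nat.choose_two_right, Nat.choose_one_right,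
    Nat.cast_div (Nat.even_mul_pred_self _).two_dvd (by norm_num), Nat.cast_mul,
    Nat.cast_pred (by omega), div_pow, div_le_div_iff₀ (by nlinarith) (by positivity)]
  nlinarith

theorem esymmMean_card_sub {s : Multiset ℝ} (hs : (0 : ℝ) ∉ s) {j : ℕ} (hj : j ≤ card s) :
    s.esymmMean (card s - j) = s.prod * (s.map (·⁻¹)).esymmMean j := by
  rw [esymmMean, esymmMean, card_map, Nat.choose_symm hj,
    ← esymm_map_inv_mul_prod hs (Nat.add_sub_cancel' hj)]
  ring

theorem exists_card_eq_esymmMean_eq (s : Multiset ℝ) :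
    ∃ ν : Multiset ℝ, card ν = card s - 1 ∧
      ∀ r < card s, ν.esymmMean r = s.esymmMean r := by
  obtain ⟨ν, hν, hesymm⟩ := exists_card_eq_mul_esymm_eq s
  refine ⟨ν, hν, fun r hr => ?_⟩
  have hchoose : ((card s - 1).choose r : ℝ) * card s = (card s).choose r * (card s - r) := by
    have := Nat.choose_mul_succ_eq (card s - 1) r
    rw [Nat.sub_add_cancel (by omega)] at this
    rw [← Nat.cast_sub hr.le]
    exact_mod_cast this
  have hm : (card s : ℝ) ≠ 0 := by exact_mod_cast (show card s ≠ 0 by omega)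
  rw [esymmMean, esymmMean, hν, div_eq_div_iff (by exact_mod_cast (Nat.choose_pos (by omega)).ne')
    (by exact_mod_cast (Nat.choose_pos hr.le).ne')]
  refine mul_left_cancel₀ hm ?_
  linear_combination ((card s).choose r : ℝ) * hesymm r hr - s.esymm r * hchoose

theorem esymmMean_mul_esymmMean_le_sq (s : Multiset ℝ) (k : ℕ) :
    s.esymmMean k * s.esymmMean (k + 2) ≤ s.esymmMean (k + 1) ^ 2 := by
  induction hm : card s using Nat.strong_induction_on generalizing s k with
  | _ m ih =>
  subst hm
  rcases lt_trichotomy (card s) (k + 2) with hlt | heq | hgt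
  · rw [esymmMean_eq_zero_of_card_lt hlt, mul_zero]
    positivity
  · by_cases h0 : (0 : ℝ) ∈ s
    · have hprod : s.esymmMean (card s) = 0 := by
        rw [esymmMean, esymm_card, prod_eq_zero h0, zero_div]
      rw [← heq, hprod, mul_zero]
      positivity
    obtain ⟨rfl⟩ : k = card s - 2 := by omega
    rw [show card s - 2 + 1 = card s - 1 by omega, show card s - 2 + 2 = card s - 0 by omega,
      esymmMean_card_sub h0 (by omega), esymmMean_card_sub h0 (by omega),
      esymmMean_card_sub h0 (by omega), esymmMean_zero]
    have := esymmMean_two_le_sq_esymmMean_one (s.map (·⁻¹))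
    calc _ = s.prod ^ 2 * (s.map (·⁻¹)).esymmMean 2 := by ring
      _ ≤ s.prod ^ 2 * (s.map (·⁻¹)).esymmMean 1 ^ 2 := by gcongr
      _ = _ := by ring
  · obtain ⟨ν, hν, hmean⟩ := exists_card_eq_esymmMean_eq s
    have := ih (card ν) (by omega) ν k rfl
    rwa [hmean k (by omega), hmean (k + 1) (by omega), hmean (k + 2) (by omega)] at this

theorem esymm_mul_esymm_add_two_le_sq (s : Multiset ℝ) (k : ℕ) :
    s.esymm k * s.esymm (k + 2) ≤ s.esymm (k + 1) ^ 2 := by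
  rcases lt_or_ge (card s) (k + 2) with hlt | hle
  · rw [esymm_eq_zero_of_card_lt hlt, mul_zero]
    positivity
  have hchoose : ∀ j ≤ card s, s.esymm j = s.esymmMean j * (card s).choose j := fun j hj => by
    rw [esymmMean, div_mul_cancel₀ _ (by exact_mod_cast (Nat.choose_pos hj).ne')]
  have hlog :
      ((card s).choose k : ℝ) * (card s).choose (k + 2) ≤ (card s).choose (k + 1) ^ 2 := by
    exact_mod_cast Nat.choose_mul_choose_add_two_le_sq (card s) k
  rw [hchoose k (by omega), hchoose (k + 1) (by omega), hchoose (k + 2) hle]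
  calc _ = s.esymmMean k * s.esymmMean (k + 2) *
        (((card s).choose k : ℝ) * (card s).choose (k + 2)) := by ring
    _ ≤ s.esymmMean (k + 1) ^ 2 * (card s).choose (k + 1) ^ 2 := by
        gcongr
        exact esymmMean_mul_esymmMean_le_sq s k
    _ = _ := by ring

theorem esymm_pos_of_forall_esymm_cons_pos {r : ℕ} {a : ℝ} {t : Multiset ℝ}
    (h : ∀ j, 1 ≤ j → j ≤ r → 0 < (a ::ₘ t).esymm j) : ∀ j < r, 0 < t.esymm j := by
  intro j hj
  induction j with
  | zero => simp [esymm_zero]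
  | succ j ih =>
    have h₁ := h (j + 1) (by omega) (by omega)
    have h₂ := h (j + 2) (by omega) hj
    rw [esymm_cons_succ] at h₁ h₂
    have hnewton := esymm_mul_esymm_add_two_le_sq t j
    have hprev := ih (by omega)
    by_contra! hneg
    nlinarith

end Multiset

open Finset Function

theorem esymm_eq_esymm_cons {n : ℕ} (j : ℕ) (x : Fin n → ℝ) (i : Fin n) :
    esymm n j x = (x i ::ₘ (univ.erase i).val.map x).esymm j := by
  rw [esymm, ← Finset.esymm_map_val, ← Multiset.map_cons, erase_val,
    Multiset.cons_erase (mem_univ i)]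

theorem esymm_update_eq_esymm_cons {n : ℕ} (j : ℕ) (x : Fin n → ℝ) (i : Fin n) (c : ℝ) :
    esymm n j (update x i c) = (c ::ₘ (univ.erase i).val.map x).esymm j := by
  rw [esymm_eq_esymm_cons j _ i, update_self]
  congr 2
  refine Multiset.map_congr rfl fun a ha => update_of_ne ?_ c x
  exact ne_of_mem_erase (s := univ) ha

theorem esymm_le_esymm_update {n r j : ℕ} {x : Fin n → ℝ} (hx : x ∈ gardingCone n r)
    {i : Fin n} {c : ℝ} (hc : x i ≤ c) (hj : j ≤ r) :
    esymm n j x ≤ esymm n j (update x i c) := by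
  rw [esymm_eq_esymm_cons j x i, esymm_update_eq_esymm_cons]
  rcases j with _ | j
  · rfl
  have hpos := Multiset.esymm_pos_of_forall_esymm_cons_pos (a := x i)
    (t := (univ.erase i).val.map x) (fun j h₁ h₂ => by
      rw [← esymm_eq_esymm_cons]; exact hx j h₁ h₂) j hj
  rw [Multiset.esymm_cons_succ, Multiset.esymm_cons_succ]
  gcongr

theorem update_mem_gardingCone {n r : ℕ} {x : Fin n → ℝ} (hx : x ∈ gardingCone n r)
    {i : Fin n} {c : ℝ} (hc : x i ≤ c) : update x i c ∈ gardingCone n r :=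
  fun j h₁ h₂ => (hx j h₁ h₂).trans_le (esymm_le_esymm_update hx hc h₂)

theorem Pi.update_induction_of_le {ι β : Type*} [Fintype ι] [DecidableEq ι] [LE β]
    {P : (ι → β) → Prop} (step : ∀ z i c, P z → z i ≤ c → P (update z i c))
    {x y : ι → β} (hx : P x) (hxy : x ≤ y) : P y := by
  suffices ∀ s : Finset ι, P (s.piecewise y x) by simpa using this univ
  intro s
  induction s using Finset.induction_on with
  | empty => simpa using hx
  | insert a s ha ih =>
    rw [piecewise_insert]
    exact step _ a _ ih (by rw [piecewise_eq_of_notMem _ _ _ ha]; exact hxy a)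

theorem isUpperSet_gardingCone (n r : ℕ) : IsUpperSet (gardingCone n r) :=
  fun _ _ hxy hx =>
    Pi.update_induction_of_le (fun _ _ _ hz hc => update_mem_gardingCone hz hc) hx hxy

theorem monotoneOn_esymm_gardingCone {n r j : ℕ} (hj : j ≤ r) :
    MonotoneOn (esymm n j) (gardingCone n r) := fun x hx _ _ hxy =>
  (Pi.update_induction_of_le (P := fun z => z ∈ gardingCone n r ∧ esymm n j x ≤ esymm n j z)
    (fun _ _ _ hz hc => ⟨update_mem_gardingCone hz.1 hc,
      hz.2.trans (esymm_le_esymm_update hz.1 hc hj)⟩) ⟨hx, le_rfl⟩ hxy).2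

theorem gardingCone_mono_general (n r : ℕ)
    (x y : Fin n → ℝ) (hx : x ∈ gardingCone n r) (hxy : ∀ i, x i ≤ y i) :
    y ∈ gardingCone n r ∧ esymm n r x ≤ esymm n r y := by
  have hy := isUpperSet_gardingCone n r hxy hx
  exact ⟨hy, monotoneOn_esymm_gardingCone le_rfl hx hy hxy⟩

/-- For `n ≥ 1` and `1 ≤ r ≤ n`: if `λ ∈ Γ_r` and `μ ∈ ℝⁿ` satisfies `μᵢ ≥ λᵢ` for
every `i`, then `μ ∈ Γ_r` and `S_r(μ) ≥ S_r(λ)`. -/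
theorem gardingCone_mono (n r : ℕ) (hn : 1 ≤ n) (hr1 : 1 ≤ r) (hrn : r ≤ n)
    (x y : Fin n → ℝ) (hx : x ∈ gardingCone n r) (hxy : ∀ i, x i ≤ y i) :
    y ∈ gardingCone n r ∧ esymm n r x ≤ esymm n r y :=
  gardingCone_mono_general n r x y hx hxy
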